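/- For α ∈ (0,1), T > 0, m, k ∈ ℕ₀ with 0 ≤ k < 2^m, and t ∈ (0,T): I^α_{T−} e_{m,k}(t) = e_{m,k}(T) · (T−t)^α / Γ(1+α) − I^{1+α}_{T−} H_{m,k}(t). -/

import Mathlib

open MeasureTheory Set

/-- The Haar function `H_{m,k}`. -/
noncomputable def Haar (m k : ℕ) (s : ℝ) : ℝ :=
  if s ∈ Set.Ioc ((k : ℝ) / 2 ^ m) (((k : ℝ) + 0.5) / 2 ^ m) then (2 : ℝ) ^ ((m : ℝ) / 2)
  else if s ∈ Set.Ioc (((k : ℝ) + 0.5) / 2 ^ m) (((k : ℝ) + 1) / 2 ^ m) then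
    -(2 : ℝ) ^ ((m : ℝ) / 2)
  else 0

/-- The Faber–Schauder function `e_{m,k}`, as the primitive of the Haar function. -/
noncomputable def FS (m k : ℕ) (t : ℝ) : ℝ := ∫ s in (0 : ℝ)..t, Haar m k s

/-- The right-sided Riemann–Liouville fractional integral of order `α` on `(t,T)`. -/
noncomputable def Iright (α : ℝ) (T : ℝ) (f : ℝ → ℝ) (t : ℝ) : ℝ :=
  (Real.Gamma α)⁻¹ * ∫ u in t..T, (u - t) ^ (α - 1) * f u

/-!
The Faber–Schauder function is a primitive `F` of the Haar function `g`, which is bounded and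
continuous off three points. Hence `u ↦ (u - t) ^ α * F u` satisfies the fundamental theorem of
calculus on `[t, T]` off a countable set, and integrating its derivative gives
`α ∫ₜᵀ (u - t) ^ (α - 1) F u du + ∫ₜᵀ (u - t) ^ α g u du = (T - t) ^ α F T`.
Dividing by `Γ(1 + α) = α Γ(α)` gives the claim.
-/

open Filter Topology intervalIntegral

theorem continuousAt_ite_mem_Ioc {X β : Type*} [LinearOrder X] [TopologicalSpace X]
    [OrderTopology X] [TopologicalSpace β] {a b x : X}
    [DecidablePred (· ∈ Ioc a b)] {f g : X → β} (hxa : x ≠ a) (hxb : x ≠ b)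
    (hf : ContinuousAt f x) (hg : ContinuousAt g x) :
    ContinuousAt (fun y => if y ∈ Ioc a b then f y else g y) x := by
  rcases hxa.lt_or_gt with hxa | hax
  · refine hg.congr ?_
    filter_upwards [Iio_mem_nhds hxa] with y hy
    exact (if_neg fun h => h.1.not_gt hy).symm
  rcases hxb.lt_or_gt with hxb | hbx
  · refine hf.congr ?_
    filter_upwards [Ioo_mem_nhds hax hxb] with y hy
    exact (if_pos (Ioo_subset_Ioc_self hy)).symm
  · refine hg.congr ?_
    filter_upwards [Ioi_mem_nhds hbx] with y hy
    exact (if_neg fun h => h.2.not_gt hy).symm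

section PrimitiveIntegration

variable {g : ℝ → ℝ} {s : Set ℝ} {a t T α : ℝ}

theorem integral_rpow_sub_mul_primitive (hg : LocallyIntegrable g) (hs : s.Countable)
    (hgs : ∀ x ∉ s, ContinuousAt g x) (hα : 0 < α) (htT : t ≤ T) :
    α * (∫ u in t..T, (u - t) ^ (α - 1) * ∫ v in a..u, g v) + ∫ u in t..T, (u - t) ^ α * g u =
      (T - t) ^ α * ∫ v in a..T, g v := by
  set F : ℝ → ℝ := fun u => ∫ v in a..u, g v
  have hg_int : ∀ b c, IntervalIntegrable g volume b c := fun b c =>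
    (hg.integrableOn_isCompact isCompact_uIcc).intervalIntegrable
  have hF : Continuous F := continuous_primitive hg_int a
  have hpow : Continuous fun u : ℝ => (u - t) ^ α :=
    (continuous_sub_right t).rpow_const fun _ => Or.inr hα.le
  have hpow_int : IntervalIntegrable (fun u : ℝ => (u - t) ^ (α - 1)) volume t T := by
    simpa using (intervalIntegrable_rpow' (by linarith : (-1 : ℝ) < α - 1)
      (a := 0) (b := T - t)).comp_sub_right t
  have I₁ : IntervalIntegrable (fun u => (u - t) ^ (α - 1) * F u) volume t T :=
    hpow_int.mul_continuousOn hF.continuousOn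
  have I₂ : IntervalIntegrable (fun u => (u - t) ^ α * g u) volume t T :=
    (hg_int t T).continuousOn_mul hpow.continuousOn
  have hderiv : ∀ x ∈ Ioo t T \ s, HasDerivAt (fun u => (u - t) ^ α * F u)
      (α * ((x - t) ^ (α - 1) * F x) + (x - t) ^ α * g x) x := by
    rintro x ⟨hx, hxs⟩
    have hF' : HasDerivAt F (g x) x :=
      integral_hasDerivAt_right (hg_int a x) hg.aestronglyMeasurable.stronglyMeasurableAtFilter
        (hgs x hxs)
    have hpow' : HasDerivAt (fun u : ℝ => (u - t) ^ α) (α * (x - t) ^ (α - 1)) x := by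
      simpa using ((hasDerivAt_id x).sub_const t).rpow_const (p := α)
        (Or.inl (sub_pos.2 hx.1).ne')
    exact (hpow'.mul hF').congr_deriv (by ring)
  have hFTC := integral_eq_of_hasDerivAt_off_countable_of_le (fun u => (u - t) ^ α * F u) _ htT
    hs (hpow.mul hF).continuousOn hderiv ((I₁.const_mul α).add I₂)
  rwa [integral_add (I₁.const_mul α) I₂, intervalIntegral.integral_const_mul, sub_self,
    Real.zero_rpow hα.ne', zero_mul, sub_zero] at hFTC

theorem Iright_primitive (hg : LocallyIntegrable g) (hs : s.Countable)
    (hgs : ∀ x ∉ s, ContinuousAt g x) (hα : 0 < α) (htT : t ≤ T) :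
    Iright α T (fun u => ∫ v in a..u, g v) t =
      (∫ v in a..T, g v) * (T - t) ^ α / Real.Gamma (1 + α) - Iright (1 + α) T g t := by
  have hΓ : Real.Gamma (1 + α) = α * Real.Gamma α := by
    rw [add_comm, Real.Gamma_add_one hα.ne']
  have hparts := integral_rpow_sub_mul_primitive (a := a) hg hs hgs hα htT
  simp only [Iright, hΓ, add_sub_cancel_left]
  field_simp [(Real.Gamma_pos_of_pos hα).ne']
  linear_combination hparts

end PrimitiveIntegration

theorem measurable_Haar (m k : ℕ) : Measurable (Haar m k) :=
  Measurable.ite measurableSet_Ioc measurable_const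
    (Measurable.ite measurableSet_Ioc measurable_const measurable_const)

theorem norm_Haar_le (m k : ℕ) (s : ℝ) : ‖Haar m k s‖ ≤ (2 : ℝ) ^ ((m : ℝ) / 2) := by
  have h : (0 : ℝ) ≤ (2 : ℝ) ^ ((m : ℝ) / 2) := by positivity
  unfold Haar; split_ifs <;> simp [abs_of_nonneg h, h]

theorem locallyIntegrable_Haar (m k : ℕ) : LocallyIntegrable (Haar m k) :=
  (locallyIntegrable_const ((2 : ℝ) ^ ((m : ℝ) / 2))).mono
    (measurable_Haar m k).aestronglyMeasurable
    (Eventually.of_forall fun s => (norm_Haar_le m k s).trans (le_abs_self _))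

theorem continuousAt_Haar (m k : ℕ) {x : ℝ}
    (hx : x ∉ ({(k : ℝ) / 2 ^ m, ((k : ℝ) + 0.5) / 2 ^ m, ((k : ℝ) + 1) / 2 ^ m} : Set ℝ)) :
    ContinuousAt (Haar m k) x := by
  simp only [mem_insert_iff, mem_singleton_iff, not_or] at hx
  obtain ⟨h₀, h₁, h₂⟩ := hx
  exact continuousAt_ite_mem_Ioc h₀ h₁ continuousAt_const
    (continuousAt_ite_mem_Ioc h₁ h₂ continuousAt_const continuousAt_const)

theorem fractional_integral_FS_right_general (α T : ℝ) (hα : α ∈ Set.Ioo (0 : ℝ) 1)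
    (m k : ℕ) (t : ℝ) (ht : t ∈ Set.Ioo (0 : ℝ) T) :
    Iright α T (FS m k) t =
      FS m k T * (T - t) ^ α / Real.Gamma (1 + α) - Iright (1 + α) T (Haar m k) t :=
  Iright_primitive (locallyIntegrable_Haar m k) (toFinite _).countable
    (fun _ hx => continuousAt_Haar m k hx) hα.1 ht.2.le

theorem fractional_integral_FS_right (α T : ℝ) (hα : α ∈ Set.Ioo (0 : ℝ) 1) (hT : 0 < T)
    (m k : ℕ) (hk : k < 2 ^ m) (t : ℝ) (ht : t ∈ Set.Ioo (0 : ℝ) T) :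
    Iright α T (FS m k) t =
      FS m k T * (T - t) ^ α / Real.Gamma (1 + α) - Iright (1 + α) T (Haar m k) t :=
  fractional_integral_FS_right_general α T hα m k t ht
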